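/- arXiv:2311.06748 — 4 statements merged into one kernel-verified Lean document; each statement's English description precedes it below -/
import Mathlib

section
/- Let a ∈ ℝ^d be a unit vector and let u₁,...,uₙ ∈ ℝ^d be unit vectors such that uᵢᵀa > 0 for all i and uᵢᵀuⱼ < 0 for all i ≠ j. Define b = Σᵢ uᵢ (uᵢᵀ a). Then ‖b − a/2‖ ≤ 1/2, with strict inequality if n > 1. -/
open scoped RealInnerProductSpace

/-- For a unit vector `a` and unit vectors `u i` with `⟪u i, a⟫ > 0` and
pairwise negative inner products, the vector `b = ∑ i, ⟪u i, a⟫ • u i` satisfies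
`‖b - a/2‖ ≤ 1/2`, with strict inequality if `n > 1`. -/
theorem stmt_0 (d n : ℕ) (a : EuclideanSpace ℝ (Fin d)) (u : Fin n → EuclideanSpace ℝ (Fin d))
    (ha : ‖a‖ = 1) (hu : ∀ i, ‖u i‖ = 1)
    (hua : ∀ i, 0 < ⟪u i, a⟫)
    (huu : ∀ i j, i ≠ j → ⟪u i, u j⟫ < 0)
    (b : EuclideanSpace ℝ (Fin d)) (hb : b = ∑ i, ⟪u i, a⟫ • u i) :
    ‖b - (1 / 2 : ℝ) • a‖ ≤ 1 / 2 ∧ (1 < n → ‖b - (1 / 2 : ℝ) • a‖ < 1 / 2) := by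
  set c : Fin n → ℝ := fun i => ⟪u i, a⟫ with hc
  have hbb : ⟪b, b⟫ = ∑ i, ∑ j, c i * c j * ⟪u i, u j⟫ := by
    rw [hb, sum_inner]
    refine Finset.sum_congr rfl fun i _ => ?_
    rw [inner_sum]
    refine Finset.sum_congr rfl fun j _ => ?_
    rw [real_inner_smul_left, real_inner_smul_right]
    ring
  have hba : ⟪b, a⟫ = ∑ i, c i ^ 2 := by
    rw [hb, sum_inner]
    refine Finset.sum_congr rfl fun i _ => ?_
    rw [real_inner_smul_left]
    ring
  have hdiag : ∀ i : Fin n, c i * c i * ⟪u i, u i⟫ = c i ^ 2 := by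
    intro i
    rw [real_inner_self_eq_norm_sq, hu i]
    ring
  set T : ℝ := ∑ i, ∑ j ∈ Finset.univ.erase i, c i * c j * ⟪u i, u j⟫ with hT
  have hsplit : ⟪b, b⟫ = ⟪b, a⟫ + T := by
    rw [hbb, hba, hT, ← Finset.sum_add_distrib]
    refine Finset.sum_congr rfl fun i _ => ?_
    rw [← hdiag i, ← Finset.add_sum_erase _ _ (Finset.mem_univ i)]
  have hterm : ∀ i : Fin n, ∀ j ∈ Finset.univ.erase i, c i * c j * ⟪u i, u j⟫ < 0 := by
    intro i j hj
    have hij : i ≠ j := (Finset.ne_of_mem_erase hj).symm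
    exact mul_neg_of_pos_of_neg (mul_pos (hua i) (hua j)) (huu i j hij)
  have hTle : T ≤ 0 := by
    apply Finset.sum_nonpos
    intro i _
    exact Finset.sum_nonpos fun j hj => (hterm i j hj).le
  have hsq : ‖b - (1 / 2 : ℝ) • a‖ ^ 2 = T + 1 / 4 := by
    rw [norm_sub_sq_real, real_inner_smul_right, norm_smul, ha]
    rw [← real_inner_self_eq_norm_sq, hsplit]
    simp
    ring
  have hnn : (0 : ℝ) ≤ ‖b - (1 / 2 : ℝ) • a‖ := norm_nonneg _
  constructor
  · nlinarith [hsq, hTle, hnn]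
  · intro hn
    have hTlt : T < 0 := by
      haveI : Nonempty (Fin n) := ⟨⟨0, by omega⟩⟩
      apply Finset.sum_neg
      · intro i _
        apply Finset.sum_neg (hterm i)
        rw [← Finset.card_pos, Finset.card_erase_of_mem (Finset.mem_univ i), Finset.card_univ,
          Fintype.card_fin]
        omega
      · exact Finset.univ_nonempty
    nlinarith [hsq, hTlt, hnn]
end

section
/- Let u, v ∈ ℝ^d be unit vectors with uᵀv < 0. Then for every a ∈ ℝ^d with ‖a‖ = 1, ‖(u uᵀ − v vᵀ) a‖ < 1. -/
open scoped RealInnerProductSpace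

/-- For unit vectors `u, v` with `⟪u, v⟫ < 0`, for every unit vector `a`,
`‖(u uᵀ − v vᵀ) a‖ < 1`, where `u uᵀ` is the rank-one map `x ↦ ⟪u, x⟫ • u`. -/
theorem stmt_3 (d : ℕ) (u v a : EuclideanSpace ℝ (Fin d))
    (hu : ‖u‖ = 1) (hv : ‖v‖ = 1) (huv : ⟪u, v⟫ < 0) (ha : ‖a‖ = 1) :
    ‖⟪u, a⟫ • u - ⟪v, a⟫ • v‖ < 1 := by
  set α := ⟪u, a⟫ with hα
  set β := ⟪v, a⟫ with hβ
  set c := ⟪u, v⟫ with hc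
  have hc' : ⟪v, u⟫ = c := by rw [real_inner_comm]
  have hau : ⟪a, u⟫ = α := by rw [real_inner_comm]
  have hav : ⟪a, v⟫ = β := by rw [real_inner_comm]
  have hc1 : -1 ≤ c := by
    have h := abs_real_inner_le_norm u v
    rw [hu, hv, mul_one, ← hc] at h
    linarith [neg_abs_le c]
  have key : ‖α • u - β • v‖^2 = α^2 + β^2 - 2*α*β*c := by
    rw [← real_inner_self_eq_norm_sq]
    simp only [inner_sub_left, inner_sub_right, real_inner_smul_left, real_inner_smul_right,
      real_inner_self_eq_norm_sq, hu, hv, hc', ← hc, norm_smul, mul_pow, sq_abs,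
      Real.norm_eq_abs, one_pow]
    ring
  rcases eq_or_lt_of_le hc1 with h1 | h1
  · have hvu : v = -u := by
      have h0 : ‖v + u‖^2 = 0 := by
        rw [← real_inner_self_eq_norm_sq]
        simp only [inner_add_left, inner_add_right, real_inner_self_eq_norm_sq, hu, hv,
          hc', ← hc, ← h1, one_pow]
        ring
      have h2 := pow_eq_zero_iff (n := 2) (by norm_num) |>.mp h0
      have h3 := norm_eq_zero.mp h2
      exact eq_neg_of_add_eq_zero_left h3
    have hβα : β = -α := by rw [hβ, hα, hvu, inner_neg_left]
    rw [hvu, hβα]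
    simp
  · have hc0 : c < 0 := huv
    have hD : 0 < 1 - c^2 := by nlinarith
    have hw : (0:ℝ) ≤ ‖(1 - c^2) • a - (α - c*β) • u - (β - c*α) • v‖^2 := by positivity
    rw [← real_inner_self_eq_norm_sq] at hw
    simp only [inner_sub_left, inner_sub_right, real_inner_smul_left, real_inner_smul_right,
      real_inner_self_eq_norm_sq, hu, hv, ha, hau, hav, hc', ← hc, ← hα, ← hβ,
      norm_smul, mul_pow, sq_abs, Real.norm_eq_abs, one_pow, mul_one] at hw
    have hS : α^2 + β^2 - 2*α*β*c ≤ 1 - c^2 := by nlinarith [hw, hD]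
    have h2 : ‖α • u - β • v‖^2 < 1 := by rw [key]; nlinarith
    nlinarith [norm_nonneg (α • u - β • v)]
end

section
/- Under the well-separated assumption (x₁ < ... < x_N, εₙ^max > 0 > εₙ^min, xₙ + εₙ^max < x_{n+1} + ε_{n+1}^min), the piecewise-linear interpolant f defined in the previous context has a unique fixed point in each open gap (xₙ + εₙ^max, x_{n+1} + ε_{n+1}^min), given by y* = (x_{n+1} εₙ^max − xₙ ε_{n+1}^min)/(εₙ^max − ε_{n+1}^min), and moreover xₙ + εₙ^max < y* < x_{n+1} + ε_{n+1}^min. -/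
/-- Under the well-separated assumption, the piecewise-linear interpolant
`f` has a unique fixed point in each open gap, given by
`y* = (x (n+1) * εmax n − x n * εmin (n+1)) / (εmax n − εmin (n+1))`, which lies strictly
inside the gap. -/
theorem stmt_8 (N : ℕ) (hN : 0 < N) (x εmin εmax : ℕ → ℝ)
    (hmono : ∀ n, n + 1 < N → x n < x (n + 1))
    (hεmax : ∀ n, n < N → 0 < εmax n)
    (hεmin : ∀ n, n < N → εmin n < 0)
    (hsep : ∀ n, n + 1 < N → x n + εmax n < x (n + 1) + εmin (n + 1))
    (f : ℝ → ℝ)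
    (hleft : ∀ y, y < x 0 + εmin 0 → f y = x 0)
    (hflat : ∀ n, n < N → ∀ y, x n + εmin n ≤ y → y ≤ x n + εmax n → f y = x n)
    (hgap : ∀ n, n + 1 < N → ∀ y, x n + εmax n < y → y < x (n + 1) + εmin (n + 1) →
      f y = (x (n + 1) - x n) / ((x (n + 1) + εmin (n + 1)) - (x n + εmax n)) *
          (y - (x n + εmax n)) + x n)
    (hright : ∀ y, x (N - 1) + εmax (N - 1) < y → f y = x (N - 1)) :
    ∀ n, n + 1 < N →
      x n + εmax n <
          (x (n + 1) * εmax n - x n * εmin (n + 1)) / (εmax n - εmin (n + 1)) ∧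
        (x (n + 1) * εmax n - x n * εmin (n + 1)) / (εmax n - εmin (n + 1)) <
          x (n + 1) + εmin (n + 1) ∧
        f ((x (n + 1) * εmax n - x n * εmin (n + 1)) / (εmax n - εmin (n + 1))) =
          (x (n + 1) * εmax n - x n * εmin (n + 1)) / (εmax n - εmin (n + 1)) ∧
        ∀ y, x n + εmax n < y → y < x (n + 1) + εmin (n + 1) → f y = y →
          y = (x (n + 1) * εmax n - x n * εmin (n + 1)) / (εmax n - εmin (n + 1)) := by
  intro n hn
  have hx := hmono n hn
  have hmax := hεmax n (by omega)
  have hmin := hεmin (n+1) hn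
  have hsep' := hsep n hn
  have hd : 0 < εmax n - εmin (n+1) := by linarith
  have hba : 0 < (x (n+1) + εmin (n+1)) - (x n + εmax n) := by linarith
  have h1 : x n + εmax n <
      (x (n + 1) * εmax n - x n * εmin (n + 1)) / (εmax n - εmin (n + 1)) := by
    rw [lt_div_iff₀ hd]; nlinarith
  have h2 : (x (n + 1) * εmax n - x n * εmin (n + 1)) / (εmax n - εmin (n + 1)) <
      x (n + 1) + εmin (n + 1) := by
    rw [div_lt_iff₀ hd]; nlinarith
  refine ⟨h1, h2, ?_, ?_⟩
  · rw [hgap n hn _ h1 h2]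
    field_simp
    ring
  · intro y hy1 hy2 hfy
    have hE := hgap n hn y hy1 hy2
    rw [hfy] at hE
    rw [eq_div_iff hd.ne']
    field_simp at hE
    nlinarith [hE]
end

section
/- Under the well-separated assumption, the piecewise-linear interpolant f is contractive toward the clean points on ℝ minus the fixed points: for every y not equal to any gap fixed point y*ₙ = (x_{n+1} εₙ^max − xₙ ε_{n+1}^min)/(εₙ^max − ε_{n+1}^min), there exist an index i and a constant 0 ≤ α < 1 (depending on y) such that |f(y) − xᵢ| ≤ α |y − xᵢ|. -/
/-- Under the well-separated assumption, the piecewise-linear interpolant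
`f` is contractive toward the clean points away from the gap fixed points: for every
`y` distinct from all gap fixed points there are an index `i` and `0 ≤ α < 1` with
`|f y − x i| ≤ α * |y − x i|`. -/
theorem stmt_9 (N : ℕ) (hN : 0 < N) (x εmin εmax : ℕ → ℝ)
    (hmono : ∀ n, n + 1 < N → x n < x (n + 1))
    (hεmax : ∀ n, n < N → 0 < εmax n)
    (hεmin : ∀ n, n < N → εmin n < 0)
    (hsep : ∀ n, n + 1 < N → x n + εmax n < x (n + 1) + εmin (n + 1))
    (f : ℝ → ℝ)
    (hleft : ∀ y, y < x 0 + εmin 0 → f y = x 0)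
    (hflat : ∀ n, n < N → ∀ y, x n + εmin n ≤ y → y ≤ x n + εmax n → f y = x n)
    (hgap : ∀ n, n + 1 < N → ∀ y, x n + εmax n < y → y < x (n + 1) + εmin (n + 1) →
      f y = (x (n + 1) - x n) / ((x (n + 1) + εmin (n + 1)) - (x n + εmax n)) *
          (y - (x n + εmax n)) + x n)
    (hright : ∀ y, x (N - 1) + εmax (N - 1) < y → f y = x (N - 1)) :
    ∀ y : ℝ,
      (∀ n, n + 1 < N →
        y ≠ (x (n + 1) * εmax n - x n * εmin (n + 1)) / (εmax n - εmin (n + 1))) →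
      ∃ i, i < N ∧ ∃ α : ℝ, 0 ≤ α ∧ α < 1 ∧ |f y - x i| ≤ α * |y - x i| := by
  intro y hy
  by_cases hR : x (N - 1) + εmax (N - 1) < y
  · exact ⟨N - 1, Nat.sub_lt hN one_pos, 0, le_refl 0, one_pos, by
      rw [hright y hR]; simp [abs_nonneg]⟩
  push_neg at hR
  by_cases hL : y < x 0 + εmin 0
  · exact ⟨0, hN, 0, le_refl 0, one_pos, by rw [hleft y hL]; simp [abs_nonneg]⟩
  push_neg at hL
  classical
  set m := Nat.findGreatest (fun n => x n + εmin n ≤ y) (N - 1) with hm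
  have hmN : m < N := lt_of_le_of_lt (Nat.findGreatest_le (N - 1)) (Nat.sub_lt hN one_pos)
  have hPm : x m + εmin m ≤ y := Nat.findGreatest_spec (P := fun n => x n + εmin n ≤ y) (Nat.zero_le _) hL
  by_cases hfc : y ≤ x m + εmax m
  · exact ⟨m, hmN, 0, le_refl 0, one_pos, by
      rw [hflat m hmN y hPm hfc]; simp [abs_nonneg]⟩
  push_neg at hfc
  have hm1 : m + 1 < N := by
    by_contra h
    push_neg at h
    have hmeq : m = N - 1 := by omega
    rw [hmeq] at hfc
    linarith
  have hub : y < x (m + 1) + εmin (m + 1) := by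
    have hng := Nat.findGreatest_is_greatest (P := fun n => x n + εmin n ≤ y) (Nat.lt_succ_self m)
      (by omega : m + 1 ≤ N - 1)
    exact lt_of_not_ge hng
  have hfy := hgap m hm1 y hfc hub
  have hd : (0:ℝ) < (x (m + 1) + εmin (m + 1)) - (x m + εmax m) := by
    have := hsep m hm1; linarith
  have he : (0:ℝ) < εmax m - εmin (m + 1) := by
    have h1 := hεmax m (by omega)
    have h2 := hεmin (m + 1) hm1
    linarith
  have hxm : x m < x (m + 1) := hmono m hm1
  have hs : (0:ℝ) < (x (m + 1) - x m) / ((x (m + 1) + εmin (m + 1)) - (x m + εmax m)) :=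
    div_pos (by linarith) hd
  -- key fixed-point identity
  have key : f y - y = ((εmax m - εmin (m + 1)) /
      ((x (m + 1) + εmin (m + 1)) - (x m + εmax m))) *
      (y - (x (m + 1) * εmax m - x m * εmin (m + 1)) / (εmax m - εmin (m + 1))) := by
    rw [hfy]
    field_simp
    ring
  have hyne := hy m hm1
  have hfgt : x m < f y := by
    rw [hfy]
    nlinarith [mul_pos hs (by linarith : (0:ℝ) < y - (x m + εmax m))]
  have hflt : f y < x (m + 1) := by
    rw [hfy]
    have h1 : (x (m + 1) - x m) / ((x (m + 1) + εmin (m + 1)) - (x m + εmax m)) *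
        (y - (x m + εmax m)) <
        (x (m + 1) - x m) / ((x (m + 1) + εmin (m + 1)) - (x m + εmax m)) *
        ((x (m + 1) + εmin (m + 1)) - (x m + εmax m)) :=
      mul_lt_mul_of_pos_left (by linarith) hs
    rw [div_mul_cancel₀ _ hd.ne'] at h1
    linarith
  have hc : (0:ℝ) < (εmax m - εmin (m + 1)) /
      ((x (m + 1) + εmin (m + 1)) - (x m + εmax m)) := div_pos he hd
  rcases hyne.lt_or_gt with hlt | hgt
  · -- y below the fixed point: contract toward x m
    have hfy_lt : f y < y := by
      have hneg : (εmax m - εmin (m + 1)) /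
          ((x (m + 1) + εmin (m + 1)) - (x m + εmax m)) *
          (y - (x (m + 1) * εmax m - x m * εmin (m + 1)) / (εmax m - εmin (m + 1))) < 0 :=
        mul_neg_of_pos_of_neg hc (by linarith)
      linarith [key]
    have hden : (0:ℝ) < y - x m := by
      have := hεmax m (by omega); linarith
    refine ⟨m, hmN, (f y - x m) / (y - x m), div_nonneg (by linarith) hden.le,
      (div_lt_one hden).2 (by linarith), ?_⟩
    rw [abs_of_pos (by linarith), abs_of_pos hden, div_mul_cancel₀ _ hden.ne']
  · -- y above the fixed point: contract toward x (m+1)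
    have hfy_gt : y < f y := by
      have hpos : 0 < (εmax m - εmin (m + 1)) /
          ((x (m + 1) + εmin (m + 1)) - (x m + εmax m)) *
          (y - (x (m + 1) * εmax m - x m * εmin (m + 1)) / (εmax m - εmin (m + 1))) :=
        mul_pos hc (by linarith)
      linarith [key]
    have hden : (0:ℝ) < x (m + 1) - y := by
      have := hεmin (m + 1) hm1; linarith
    refine ⟨m + 1, hm1, (x (m + 1) - f y) / (x (m + 1) - y),
      div_nonneg (by linarith) hden.le,
      (div_lt_one hden).2 (by linarith), ?_⟩
    rw [abs_sub_comm, abs_of_pos (by linarith), abs_sub_comm,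
      abs_of_pos hden, div_mul_cancel₀ _ hden.ne']
end
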